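/- Let m, n ≥ 1, let Ξ ⊆ ℝ^m be an open convex set, and let r : ℝ^m → ℝ^n be twice continuously differentiable on Ξ. Let h : ℝ^n → ℝ be a nodal spacing function and suppose there are constants h_M > 0, σ_m > 0 and S ≥ 0 such that: (i) 0 < h(r(ξ)) ≤ h_M for all ξ ∈ Ξ; (ii) ‖Dr(ξ)u‖ ≥ σ_m‖u‖ for all ξ ∈ Ξ and all u ∈ ℝ^m; (iii) ‖D²r_i(ξ)‖ ≤ S for every component i = 1,…,n and all ξ ∈ Ξ, where ‖D²r_i(ξ)‖ is the operator norm of the second derivative of the i-th coordinate function of r. Then for every ξ ∈ Ξ and every unit vector s ∈ ℝ^m such that η = ξ + (h(r(ξ)) / ‖Dr(ξ)s‖) s lies in Ξ, the spacing error Δh = h(r(ξ)) − ‖r(η) − r(ξ)‖ satisfies the uniform bound |Δh| ≤ (√n / 2) · h_M² · S / σ_m². -/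

import Mathlib

/-!
By the choice of the step length `α = h(r ξ) / ‖Dr(ξ) s‖`, the linearized step `Dr(ξ)(η - ξ)`
has length exactly `h(r ξ)`, so `|Δh|` is at most the norm of the first-order Taylor remainder of
`r` at `ξ`. Each component of that remainder is at most `S/2 · ‖η - ξ‖²`, hence the remainder
is at most `√n · S/2 · α²`, and `α ≤ h_M / σ_m`.
-/

open Set

section Taylor

variable {E F : Type*} [NormedAddCommGroup E] [NormedSpace ℝ E]
  [NormedAddCommGroup F] [NormedSpace ℝ F]

theorem Convex.norm_image_sub_sub_fderiv_le_of_lipschitz {s : Set E} (hs : Convex ℝ s)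
    {f : E → F} {f' : E → E →L[ℝ] F} (hf : ∀ z ∈ s, HasFDerivAt f (f' z) z)
    {L : ℝ} {x y : E} (hx : x ∈ s) (hy : y ∈ s)
    (hL : ∀ z ∈ s, ‖f' z - f' x‖ ≤ L * ‖z - x‖) :
    ‖f y - f x - f' x (y - x)‖ ≤ L / 2 * ‖y - x‖ ^ 2 := by
  set v := y - x
  have hseg : ∀ t ∈ Icc (0 : ℝ) 1, x + t • v ∈ s := fun t ht => by
    simpa [v] using hs.add_smul_sub_mem hx hy ht
  let g : ℝ → F := fun t => f (x + t • v) - f x - t • f' x v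
  have hg : ∀ t ∈ Icc (0 : ℝ) 1, HasDerivAt g ((f' (x + t • v) - f' x) v) t := by
    intro t ht
    have hline : HasDerivAt (fun t : ℝ => x + t • v) v t := by
      simpa using ((hasDerivAt_id t).smul_const v).const_add x
    refine ((((hf _ (hseg t ht)).comp_hasDerivAt t hline).sub_const (f x)).sub
      ((hasDerivAt_id t).smul_const (f' x v))).congr_deriv ?_
    simp
  have hB : ∀ t : ℝ, HasDerivAt (fun t => L / 2 * ‖v‖ ^ 2 * t ^ 2) (L * ‖v‖ ^ 2 * t) t :=
    fun t => ((hasDerivAt_pow 2 t).const_mul (L / 2 * ‖v‖ ^ 2)).congr_deriv (by ring)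
  have hg1 : ‖g 1‖ ≤ L / 2 * ‖v‖ ^ 2 * 1 ^ 2 := by
    refine image_norm_le_of_norm_deriv_right_le_deriv_boundary
      (fun t ht => (hg t ht).continuousAt.continuousWithinAt)
      (fun t ht => (hg t (Ico_subset_Icc_self ht)).hasDerivWithinAt)
      (by simp [g]) hB (fun t ht => ?_) (right_mem_Icc.2 zero_le_one)
    calc ‖(f' (x + t • v) - f' x) v‖ ≤ ‖f' (x + t • v) - f' x‖ * ‖v‖ :=
          (f' (x + t • v) - f' x).le_opNorm v
      _ ≤ L * ‖t • v‖ * ‖v‖ := by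
        gcongr
        simpa using hL _ (hseg t (Ico_subset_Icc_self ht))
      _ = L * ‖v‖ ^ 2 * t := by rw [norm_smul, Real.norm_of_nonneg ht.1]; ring
  simpa [g, v] using hg1

theorem Convex.norm_fderiv_sub_fderiv_le_of_norm_iteratedFDeriv_two_le {s : Set E}
    (hs : Convex ℝ s) (hso : IsOpen s) {f : E → F} (hf : ContDiffOn ℝ 2 f s) {S : ℝ}
    (hS : ∀ z ∈ s, ‖iteratedFDeriv ℝ 2 f z‖ ≤ S) {x y : E} (hx : x ∈ s) (hy : y ∈ s) :
    ‖fderiv ℝ f y - fderiv ℝ f x‖ ≤ S * ‖y - x‖ := by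
  refine hs.norm_image_sub_le_of_norm_fderivWithin_le
    ((hf.fderiv_of_isOpen hso le_rfl).differentiableOn one_ne_zero) (fun z hz => ?_) hx hy
  rw [fderivWithin_of_isOpen hso hz,
    ← norm_iteratedFDeriv_zero (𝕜 := ℝ) (f := fderiv ℝ (fderiv ℝ f)), norm_iteratedFDeriv_fderiv,
    norm_iteratedFDeriv_fderiv]
  exact hS z hz

theorem Convex.norm_image_sub_sub_fderiv_le_of_norm_iteratedFDeriv_two_le {s : Set E}
    (hs : Convex ℝ s) (hso : IsOpen s) {f : E → F} (hf : ContDiffOn ℝ 2 f s) {S : ℝ}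
    (hS : ∀ z ∈ s, ‖iteratedFDeriv ℝ 2 f z‖ ≤ S) {x y : E} (hx : x ∈ s) (hy : y ∈ s) :
    ‖f y - f x - fderiv ℝ f x (y - x)‖ ≤ S / 2 * ‖y - x‖ ^ 2 :=
  hs.norm_image_sub_sub_fderiv_le_of_lipschitz
    (fun _ hz => ((hf.contDiffAt (hso.mem_nhds hz)).differentiableAt two_ne_zero).hasFDerivAt)
    hx hy fun _ hz => hs.norm_fderiv_sub_fderiv_le_of_norm_iteratedFDeriv_two_le hso hf hS hx hz

end Taylor

theorem EuclideanSpace.norm_le_sqrt_card_mul {𝕜 ι : Type*} [RCLike 𝕜] [Fintype ι]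
    {x : EuclideanSpace 𝕜 ι} {C : ℝ} (hx : ∀ i, ‖x i‖ ≤ C) :
    ‖x‖ ≤ √(Fintype.card ι) * C := by
  rcases isEmpty_or_nonempty ι with hι | ⟨⟨i⟩⟩
  · simp [Subsingleton.elim x 0]
  have hC : 0 ≤ C := (norm_nonneg _).trans (hx i)
  calc ‖x‖ = √(∑ i, ‖x i‖ ^ 2) := EuclideanSpace.norm_eq x
    _ ≤ √(∑ _ : ι, C ^ 2) := by gcongr with i; exact hx i
    _ = √(Fintype.card ι) * C := by simp [Real.sqrt_mul, Real.sqrt_sq hC]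

theorem Convex.norm_image_sub_sub_fderiv_le_of_forall_norm_iteratedFDeriv_two_apply_le
    {E ι : Type*} [NormedAddCommGroup E] [NormedSpace ℝ E] [Fintype ι]
    {s : Set E} (hs : Convex ℝ s) (hso : IsOpen s) {r : E → EuclideanSpace ℝ ι}
    (hr : ContDiffOn ℝ 2 r s) {S : ℝ}
    (hS : ∀ i, ∀ z ∈ s, ‖iteratedFDeriv ℝ 2 (fun x => r x i) z‖ ≤ S)
    {x y : E} (hx : x ∈ s) (hy : y ∈ s) :
    ‖r y - r x - fderiv ℝ r x (y - x)‖ ≤ √(Fintype.card ι) * (S / 2 * ‖y - x‖ ^ 2) := by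
  refine EuclideanSpace.norm_le_sqrt_card_mul fun i => ?_
  let π := EuclideanSpace.proj (𝕜 := ℝ) (ι := ι) i
  have hrx : DifferentiableAt ℝ r x :=
    (hr.contDiffAt (hso.mem_nhds hx)).differentiableAt two_ne_zero
  have hDi : fderiv ℝ (fun z => r z i) x = π.comp (fderiv ℝ r x) :=
    (π.hasFDerivAt.comp x hrx.hasFDerivAt).fderiv
  have hfi : ContDiffOn ℝ 2 (fun z => r z i) s := π.contDiff.comp_contDiffOn hr
  simpa [hDi, π] using
    hs.norm_image_sub_sub_fderiv_le_of_norm_iteratedFDeriv_two_le hso hfi (hS i) hx hy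

theorem ContinuousLinearMap.norm_apply_smul_div_norm_apply {E F : Type*}
    [NormedAddCommGroup E] [NormedSpace ℝ E] [NormedAddCommGroup F] [NormedSpace ℝ F]
    (L : E →L[ℝ] F) {v : E} (hv : L v ≠ 0) {c : ℝ} (hc : 0 ≤ c) :
    ‖L ((c / ‖L v‖) • v)‖ = c := by
  rw [map_smul, norm_smul, Real.norm_of_nonneg (by positivity),
    div_mul_cancel₀ _ (norm_ne_zero_iff.2 hv)]

theorem spacing_error_bound_global_general
    (m n : ℕ)
    (Ξ : Set (EuclideanSpace ℝ (Fin m))) (hΞopen : IsOpen Ξ) (hΞconv : Convex ℝ Ξ)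
    (r : EuclideanSpace ℝ (Fin m) → EuclideanSpace ℝ (Fin n))
    (hr : ContDiffOn ℝ 2 r Ξ)
    (h : EuclideanSpace ℝ (Fin n) → ℝ)
    (hM σm S : ℝ) (hhM : 0 < hM) (hσm : 0 < σm) (hS : 0 ≤ S)
    (hpos : ∀ ξ ∈ Ξ, 0 < h (r ξ))
    (hbound : ∀ ξ ∈ Ξ, h (r ξ) ≤ hM)
    (hsing : ∀ ξ ∈ Ξ, ∀ u : EuclideanSpace ℝ (Fin m), σm * ‖u‖ ≤ ‖fderiv ℝ r ξ u‖)
    (hhess : ∀ i : Fin n, ∀ ξ ∈ Ξ, ‖iteratedFDeriv ℝ 2 (fun x => r x i) ξ‖ ≤ S) :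
    ∀ ξ ∈ Ξ, ∀ s : EuclideanSpace ℝ (Fin m), ‖s‖ = 1 →
      ∀ η : EuclideanSpace ℝ (Fin m),
        η = ξ + (h (r ξ) / ‖fderiv ℝ r ξ s‖) • s → η ∈ Ξ →
          |h (r ξ) - ‖r η - r ξ‖| ≤ Real.sqrt n / 2 * hM ^ 2 * S / σm ^ 2 := by
  intro ξ hξ s hs η hη hηΞ
  set D := fderiv ℝ r ξ
  set α := h (r ξ) / ‖D s‖
  have hDs : σm ≤ ‖D s‖ := by simpa [hs] using hsing ξ hξ s
  have hα : 0 ≤ α := div_nonneg (hpos ξ hξ).le (norm_nonneg _)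
  have hαle : α ≤ hM / σm := div_le_div₀ hhM.le (hbound ξ hξ) hσm hDs
  have hstep : η - ξ = α • s := by rw [hη, add_sub_cancel_left]
  have hlin : ‖D (η - ξ)‖ = h (r ξ) := by
    rw [hstep]
    exact D.norm_apply_smul_div_norm_apply (norm_pos_iff.1 (hσm.trans_le hDs)) (hpos ξ hξ).le
  have hdist : ‖η - ξ‖ = α := by rw [hstep, norm_smul, hs, Real.norm_of_nonneg hα, mul_one]
  have hremainder : ‖r η - r ξ - D (η - ξ)‖ ≤ √n * (S / 2 * α ^ 2) := by
    simpa only [hdist, Fintype.card_fin] using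
      hΞconv.norm_image_sub_sub_fderiv_le_of_forall_norm_iteratedFDeriv_two_apply_le
        hΞopen hr hhess hξ hηΞ
  calc |h (r ξ) - ‖r η - r ξ‖| ≤ ‖r η - r ξ - D (η - ξ)‖ := by
        rw [← hlin, norm_sub_rev (r η - r ξ)]; exact abs_norm_sub_norm_le _ _
    _ ≤ √n * (S / 2 * α ^ 2) := hremainder
    _ ≤ √n * (S / 2 * (hM / σm) ^ 2) := by gcongr
    _ = √n / 2 * hM ^ 2 * S / σm ^ 2 := by field_simp

/-- Third (global) estimate of Proposition 2.1: with a uniform bound `h(r(ξ)) ≤ h_M` on the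
spacing function, a uniform lower bound `σ_m` on the smallest singular value of the Jacobian,
and a uniform upper bound `S` on the operator norms of the Hessians of the components of `r`
over the convex parametric domain `Ξ`, the spacing error satisfies
`|Δh| ≤ (√n / 2) · h_M² · S / σ_m²`. -/
theorem spacing_error_bound_global
    (m n : ℕ) (hm : 1 ≤ m) (hn : 1 ≤ n)
    (Ξ : Set (EuclideanSpace ℝ (Fin m))) (hΞopen : IsOpen Ξ) (hΞconv : Convex ℝ Ξ)
    (r : EuclideanSpace ℝ (Fin m) → EuclideanSpace ℝ (Fin n))
    (hr : ContDiffOn ℝ 2 r Ξ)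
    (h : EuclideanSpace ℝ (Fin n) → ℝ)
    (hM σm S : ℝ) (hhM : 0 < hM) (hσm : 0 < σm) (hS : 0 ≤ S)
    (hpos : ∀ ξ ∈ Ξ, 0 < h (r ξ))
    (hbound : ∀ ξ ∈ Ξ, h (r ξ) ≤ hM)
    (hsing : ∀ ξ ∈ Ξ, ∀ u : EuclideanSpace ℝ (Fin m), σm * ‖u‖ ≤ ‖fderiv ℝ r ξ u‖)
    (hhess : ∀ i : Fin n, ∀ ξ ∈ Ξ, ‖iteratedFDeriv ℝ 2 (fun x => r x i) ξ‖ ≤ S) :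
    ∀ ξ ∈ Ξ, ∀ s : EuclideanSpace ℝ (Fin m), ‖s‖ = 1 →
      ∀ η : EuclideanSpace ℝ (Fin m),
        η = ξ + (h (r ξ) / ‖fderiv ℝ r ξ s‖) • s → η ∈ Ξ →
          |h (r ξ) - ‖r η - r ξ‖| ≤ Real.sqrt n / 2 * hM ^ 2 * S / σm ^ 2 :=
  spacing_error_bound_global_general m n Ξ hΞopen hΞconv r hr h hM σm S hhM hσm hS hpos hbound hsing
    hhess
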